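/- arXiv:1806.05885 — 2 statements merged into one kernel-verified Lean document; each statement's English description precedes it below -/
import Mathlib

section
/- For every Gauss code w on n letters, proj^LP(rev(w)) = proj^LP(rev(proj^LP(w))). -/
/-- A Gauss code on `n` letters: a bijection from the `2*n` positions to
letters paired with a side (`false` = L, `true` = R). -/
abbrev GaussCode (n : ℕ) := Fin (2 * n) ≃ Fin n × Bool

instance (n : ℕ) [NeZero n] : NeZero (2 * n) := ⟨by have := NeZero.ne n; omega⟩

namespace GaussCode

variable {n : ℕ}

/-- `π_*(w)`: relabel the letters by the permutation `π`. -/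
def permAct (π : Equiv.Perm (Fin n)) (w : GaussCode n) : GaussCode n :=
  w.trans (π.prodCongr (Equiv.refl Bool))

/-- `shift[m](w)`: the code whose entry at position `i` is the entry of `w` at
position `i + m` (mod `2n`). -/
def shift [NeZero n] (m : ℕ) (w : GaussCode n) : GaussCode n :=
  (Equiv.addRight (Fin.ofNat (2 * n) m)).trans w

/-- `rev(w)`: the code whose entry at position `i` is the entry of `w` at
position `2n - 1 - i`. -/
def rev (w : GaussCode n) : GaussCode n :=
  (Fin.revPerm).trans w

/-- A Gauss code is left preferred if its `L`-entries appear in the order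
`(1,L), (2,L), …, (n,L)` and its entry at position `0` is `(1,L)`. -/
def IsLeftPreferred [NeZero n] (w : GaussCode n) : Prop :=
  StrictMono (fun j : Fin n => w.symm (j, false)) ∧ w 0 = (0, false)

/-- `proj^LP(w)`: relabel letters in the order of appearance of their `L`-entries,
then rotate so that `(1,L)` is at position `0`. -/
def projLP [NeZero n] (w : GaussCode n) : GaussCode n :=
  let π : Equiv.Perm (Fin n) := (Tuple.sort (fun j : Fin n => w.symm (j, false)))⁻¹
  let w' := permAct π w
  shift ((w'.symm ((0 : Fin n), false)).val) w'

/-- `shift^LP(w) := proj^LP(shift[1](w))`. -/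
def shiftLP [NeZero n] (w : GaussCode n) : GaussCode n :=
  projLP (shift 1 w)

/-- `rev^LP(w) := proj^LP(rev(w))`. -/
def revLP [NeZero n] (w : GaussCode n) : GaussCode n :=
  projLP (rev w)

/-- The value of an entry in the order `(1,L) < (1,R) < (2,L) < (2,R) < …`. -/
def entryKey (e : Fin n × Bool) : ℕ :=
  2 * e.1.val + (if e.2 then 1 else 0)

/-- Lexicographic (strict) order on Gauss codes, comparing entries position by
position in the order `(1,L) < (1,R) < (2,L) < (2,R) < …`. -/
def lexLt (w w' : GaussCode n) : Prop :=
  ∃ i : Fin (2 * n), (∀ k, k < i → w k = w' k) ∧ entryKey (w i) < entryKey (w' i)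

/-- Lexicographic order on Gauss codes. -/
def lexLe (w w' : GaussCode n) : Prop :=
  w = w' ∨ lexLt w w'

/-- A left preferred Gauss code is left canonical if it is the smallest element
of its `shift^LP`-orbit `{w, shift^LP(w), …, (shift^LP)^{n-1}(w)}`. -/
def IsLeftCanonical [NeZero n] (w : GaussCode n) : Prop :=
  IsLeftPreferred w ∧ ∀ k < n, lexLe w (shiftLP^[k] w)

/-- `proj^LC(w)`: the smallest element of the `shift^LP`-orbit of `proj^LP(w)`. -/
noncomputable def projLC [NeZero n] (w : GaussCode n) : GaussCode n :=
  letI := Classical.propDecidable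
  if h : ∃ v : GaussCode n, (∃ k < n, v = shiftLP^[k] (projLP w)) ∧
      ∀ k < n, lexLe v (shiftLP^[k] (projLP w))
  then h.choose else projLP w

/-- `rev^LC(w) := proj^LC(rev(w))`. -/
noncomputable def revLC [NeZero n] (w : GaussCode n) : GaussCode n :=
  projLC (rev w)

/-- Oriented equivalence of Gauss codes: `w' = shift[m](π_*(w))` for some
permutation `π` and integer `m`. -/
def OrientedEquiv [NeZero n] (w w' : GaussCode n) : Prop :=
  ∃ (π : Equiv.Perm (Fin n)) (m : ℕ), w' = shift m (permAct π w)

/-- Unoriented equivalence: `w` is orientedly equivalent to `w'` or to `rev(w')`. -/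
def UnorientedEquiv [NeZero n] (w w' : GaussCode n) : Prop :=
  OrientedEquiv w w' ∨ OrientedEquiv w (rev w')

/-- A Gauss code is 1-reducible if two cyclically adjacent entries share the same letter. -/
def OneReducible [NeZero n] (w : GaussCode n) : Prop :=
  ∃ i : Fin (2 * n), (w i).1 = (w (i + 1)).1

/-- A Gauss code is 2-reducible (cyclically, with `L = false`, `R = true`). -/
def TwoReducible [NeZero n] (w : GaussCode n) : Prop :=
  ∃ (i i' : Fin (2 * n)) (j k : Fin n), j ≠ k ∧
    ((w i = (j, false) ∧ w (i + 1) = (k, true) ∧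
        w i' = (j, true) ∧ w (i' + 1) = (k, false)) ∨
     (w i = (j, false) ∧ w (i + 1) = (k, true) ∧
        w i' = (k, false) ∧ w (i' + 1) = (j, true)) ∨
     (w i = (j, true) ∧ w (i + 1) = (k, false) ∧
        w i' = (k, true) ∧ w (i' + 1) = (j, false)))

/-- A Gauss code is minimal if it is neither 1-reducible nor 2-reducible. -/
def IsMinimal [NeZero n] (w : GaussCode n) : Prop :=
  ¬ OneReducible w ∧ ¬ TwoReducible w

/-- `σ_w`: the involution of positions sending each position to the unique other
position carrying the same letter. -/
def sigmaMap (w : GaussCode n) : Fin (2 * n) → Fin (2 * n) :=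
  fun i => w.symm ((w i).1, !(w i).2)

/-- `h_w`: the side (`false` = L, `true` = R) of the entry at each position. -/
def hMap (w : GaussCode n) : Fin (2 * n) → Bool :=
  fun i => (w i).2

end GaussCode

/-!
Up to relabelling, `proj^LP(w)` is `w` rotated to start at its first `L`-entry, at position `m`,
and a left preferred code obtained from `w` by relabelling and rotating is determined by its
starting position. Hence `proj^LP` ignores relabellings and is unchanged by moving the start
forward across `R`-entries only. Now `rev(proj^LP(w))` is, up to relabelling, `rev(w)` with its
start moved back by `m`, across the reversals of the `m` initial `R`-entries of `w`.
-/

lemma Fin.add_le_of_le_sub {m : ℕ} {a b c : Fin m} (hac : a ≤ c) (hb : b ≤ c - a) :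
    a + b ≤ c := by
  rw [Fin.le_def, Fin.sub_val_of_le hac] at hb
  rw [Fin.le_def] at hac ⊢
  rw [Fin.val_add_eq_of_add_lt (by omega)]
  omega

lemma Fin.le_rev_add {m : ℕ} {a c : Fin m} (hac : a ≤ c) : a ≤ Fin.rev c + a := by
  rw [Fin.le_def] at hac ⊢
  rw [Fin.val_add_eq_of_add_lt] <;> simp only [Fin.val_rev] <;> omega

namespace GaussCode

variable {n : ℕ}

def posL (w : GaussCode n) (j : Fin n) : Fin (2 * n) := w.symm (j, false)

lemma posL_injective (w : GaussCode n) : Function.Injective (posL w) := fun _ _ h =>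
  (Prod.ext_iff.mp (w.symm.injective h)).1

@[simp]
lemma posL_permAct (π : Equiv.Perm (Fin n)) (w : GaussCode n) (j : Fin n) :
    posL (permAct π w) j = posL w (π.symm j) := by
  simp [posL, permAct]

lemma permAct_permAct (π ρ : Equiv.Perm (Fin n)) (w : GaussCode n) :
    permAct π (permAct ρ w) = permAct (ρ.trans π) w := rfl

lemma rev_permAct (π : Equiv.Perm (Fin n)) (w : GaussCode n) :
    rev (permAct π w) = permAct π (rev w) := rfl

lemma posL_rev (w : GaussCode n) (j : Fin n) : posL (rev w) j = Fin.rev (posL w j) := rfl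

def sortL (w : GaussCode n) : GaussCode n :=
  permAct (Tuple.sort (posL w))⁻¹ w

lemma posL_sortL (w : GaussCode n) : posL (sortL w) = posL w ∘ Tuple.sort (posL w) := by
  ext j
  simp [sortL, Equiv.Perm.inv_def]

lemma strictMono_posL_sortL (w : GaussCode n) : StrictMono (posL (sortL w)) := by
  rw [posL_sortL]
  exact (Tuple.monotone_sort (posL w)).strictMono_of_injective
    ((posL_injective w).comp (Tuple.sort (posL w)).injective)

section

variable [NeZero n]

/-- `shift` with the amount taken in `Fin (2 * n)`, where it is additive. -/
def rotate (a : Fin (2 * n)) (w : GaussCode n) : GaussCode n :=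
  (Equiv.addRight a).trans w

lemma shift_val (a : Fin (2 * n)) (w : GaussCode n) : shift a.val w = rotate a w := by
  rw [shift, rotate, Fin.ofNat_val_eq_self]

@[simp]
lemma posL_rotate (a : Fin (2 * n)) (w : GaussCode n) (j : Fin n) :
    posL (rotate a w) j = posL w j - a := by
  simp [posL, rotate, sub_eq_add_neg]

lemma rotate_rotate (a b : Fin (2 * n)) (w : GaussCode n) :
    rotate a (rotate b w) = rotate (b + a) w :=
  Equiv.ext fun i => congrArg w (by simp [add_assoc, add_comm a b])

@[simp]
lemma rotate_zero (w : GaussCode n) : rotate 0 w = w :=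
  Equiv.ext fun i => congrArg w (add_zero i)

lemma rotate_permAct (a : Fin (2 * n)) (π : Equiv.Perm (Fin n)) (w : GaussCode n) :
    rotate a (permAct π w) = permAct π (rotate a w) := rfl

lemma rev_rotate (a : Fin (2 * n)) (w : GaussCode n) :
    rev (rotate a w) = rotate (-a) (rev w) :=
  Equiv.ext fun i => congrArg w (by simp [← sub_eq_add_neg, Fin.rev_sub])

lemma posL_sortL_zero_le (w : GaussCode n) (j : Fin n) : posL (sortL w) 0 ≤ posL w j := by
  have hj : posL w j = posL (sortL w) ((Tuple.sort (posL w)).symm j) := by simp [posL_sortL]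
  exact hj ▸ (strictMono_posL_sortL w).monotone (Fin.zero_le _)

lemma projLP_eq_rotate_sortL (w : GaussCode n) :
    projLP w = rotate (posL (sortL w) 0) (sortL w) :=
  shift_val _ _

lemma isLeftPreferred_rotate_posL_zero {u : GaussCode n} (hu : StrictMono (posL u)) :
    IsLeftPreferred (rotate (posL u 0) u) := by
  refine ⟨fun i j hij => ?_, by simp [rotate, posL]⟩
  have hi := hu.monotone (Fin.zero_le i)
  have hj := hu.monotone (Fin.zero_le j)
  have hij' := hu hij
  change posL (rotate _ u) i < posL (rotate _ u) j
  simp only [posL_rotate, Fin.lt_def, Fin.sub_val_of_le hi, Fin.sub_val_of_le hj]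
  rw [Fin.le_def] at hi hj
  rw [Fin.lt_def] at hij'
  omega

lemma isLeftPreferred_projLP (w : GaussCode n) : IsLeftPreferred (projLP w) :=
  projLP_eq_rotate_sortL w ▸ isLeftPreferred_rotate_posL_zero (strictMono_posL_sortL w)

lemma IsLeftPreferred.permAct_eq {u : GaussCode n} (ρ : Equiv.Perm (Fin n))
    (hu : IsLeftPreferred u) (hρu : IsLeftPreferred (permAct ρ u)) : permAct ρ u = u := by
  have hρu' : StrictMono (posL u ∘ ρ.symm) :=
    (funext (posL_permAct ρ u) : posL (permAct ρ u) = posL u ∘ ρ.symm) ▸ hρu.1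
  have hrange : Set.range (posL u ∘ ρ.symm) = Set.range (posL u) := by
    rw [Set.range_comp, Equiv.range_eq_univ, Set.image_univ]
  have hρ : ∀ j, ρ.symm j = j := fun j =>
    posL_injective u (congrFun ((hρu'.range_inj hu.1).1 hrange) j)
  exact Equiv.ext fun i => Prod.ext (ρ.symm_apply_eq.mp (hρ _)).symm rfl

lemma IsLeftPreferred.posL_symm_zero {w : GaussCode n} {a : Fin (2 * n)}
    {π : Equiv.Perm (Fin n)} (h : IsLeftPreferred (rotate a (permAct π w))) :
    posL w (π.symm 0) = a := by
  have h0 : posL (rotate a (permAct π w)) 0 = 0 := (Equiv.symm_apply_eq _).mpr h.2.symm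
  simpa [sub_eq_zero] using h0

/-- A left preferred code in the oriented class of `w` is fixed by where it starts: the start is
an `L`-entry of `w`, and the relabelling is then forced. -/
lemma IsLeftPreferred.rotate_permAct_unique {w : GaussCode n} {a b : Fin (2 * n)}
    {π ρ : Equiv.Perm (Fin n)} (ha : ∀ j, a ≤ posL w j) (hb : ∀ j, b ≤ posL w j)
    (hπ : IsLeftPreferred (rotate a (permAct π w)))
    (hρ : IsLeftPreferred (rotate b (permAct ρ w))) :
    rotate b (permAct ρ w) = rotate a (permAct π w) := by
  obtain rfl : b = a := le_antisymm (hπ.posL_symm_zero ▸ hb _) (hρ.posL_symm_zero ▸ ha _)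
  have hρπ : rotate b (permAct ρ w) = permAct (π.symm.trans ρ) (rotate b (permAct π w)) := by
    rw [rotate_permAct, rotate_permAct, permAct_permAct, ← Equiv.trans_assoc,
      Equiv.self_trans_symm, Equiv.refl_trans]
  exact hρπ ▸ hπ.permAct_eq _ (hρπ ▸ hρ)

lemma projLP_eq_of_isLeftPreferred {w : GaussCode n} {a : Fin (2 * n)} {π : Equiv.Perm (Fin n)}
    (ha : ∀ j, a ≤ posL w j) (h : IsLeftPreferred (rotate a (permAct π w))) :
    projLP w = rotate a (permAct π w) := by
  have hproj := isLeftPreferred_projLP w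
  rw [projLP_eq_rotate_sortL, sortL] at hproj ⊢
  exact h.rotate_permAct_unique ha (posL_sortL_zero_le w) hproj

lemma projLP_permAct (σ : Equiv.Perm (Fin n)) (w : GaussCode n) :
    projLP (permAct σ w) = projLP w := by
  have ha : ∀ j, posL (sortL (permAct σ w)) 0 ≤ posL w j := fun j => by
    simpa using posL_sortL_zero_le (permAct σ w) (σ j)
  have h := isLeftPreferred_projLP (permAct σ w)
  rw [projLP_eq_rotate_sortL] at h ⊢
  generalize posL (sortL (permAct σ w)) 0 = a at ha h ⊢
  rw [sortL, permAct_permAct] at h ⊢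
  exact (projLP_eq_of_isLeftPreferred ha h).symm

/-- Moving the starting point forward over `R`-entries only does not change `projLP`. -/
lemma projLP_rotate_of_le {a : Fin (2 * n)} {w : GaussCode n} (ha : ∀ j, a ≤ posL w j) :
    projLP (rotate a w) = projLP w := by
  have hb : ∀ j, a + posL (sortL (rotate a w)) 0 ≤ posL w j := fun j =>
    Fin.add_le_of_le_sub (ha j) (by simpa using posL_sortL_zero_le (rotate a w) j)
  have h := isLeftPreferred_projLP (rotate a w)
  rw [projLP_eq_rotate_sortL] at h ⊢
  generalize posL (sortL (rotate a w)) 0 = b at hb h ⊢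
  rw [sortL, ← rotate_permAct, rotate_rotate] at h ⊢
  exact (projLP_eq_of_isLeftPreferred hb h).symm

end

end GaussCode

open GaussCode in
/-- `proj^LP(rev(w)) = proj^LP(rev(proj^LP(w)))`. -/
theorem stmt2 (n : ℕ) [NeZero n] (w : GaussCode n) :
    projLP (rev w) = projLP (rev (projLP w)) := by
  set m := posL (sortL w) 0
  have hm : ∀ j, m ≤ posL w j := posL_sortL_zero_le w
  have hrev : rotate m (rotate (-m) (rev w)) = rev w := by simp [rotate_rotate]
  have hproj : rev (projLP w) = permAct (Tuple.sort (posL w))⁻¹ (rotate (-m) (rev w)) := by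
    rw [projLP_eq_rotate_sortL, rev_rotate]
    rfl
  rw [hproj, projLP_permAct]
  conv_lhs => rw [← hrev]
  refine projLP_rotate_of_le fun j => ?_
  rw [posL_rotate, posL_rev, sub_neg_eq_add]
  exact Fin.le_rev_add (hm j)
end

section
/- For every left preferred Gauss code w on n letters, rev^LP(rev^LP(w)) = w; that is, rev^LP is an involution of the set of left preferred Gauss codes on n letters. -/
/-!
For a left preferred code `w` let `P` be the position of its last `L`-entry. Reversing `w`
lists the `L`-entries in decreasing letter order, so `proj^LP` relabels letters by `j ↦ n-1-j`
and rotates `2n-1-P` to position `0`; altogether `rev^LP(w)` reads `w` backwards from `P`,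
i.e. its entry at `i` is that of `w` at `P - i` with the letter reversed. The last `L`-entry
of this reflected code again sits at `P`, so applying `rev^LP` twice reflects twice about the
same centre and gives back `w`.
-/

theorem Tuple.sort_eq_of_strictMono_comp {n : ℕ} {α : Type*} [LinearOrder α] {f : Fin n → α}
    {σ : Equiv.Perm (Fin n)} (h : StrictMono (f ∘ σ)) : Tuple.sort f = σ :=
  (Tuple.eq_sort_iff.2 ⟨h.monotone, fun _ _ hij hf => absurd hf (h hij).ne⟩).symm

namespace GaussCode

variable {n : ℕ}

theorem permAct_apply (π : Equiv.Perm (Fin n)) (w : GaussCode n) (i : Fin (2 * n)) :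
    permAct π w i = (π (w i).1, (w i).2) := rfl

theorem permAct_symm_apply (π : Equiv.Perm (Fin n)) (w : GaussCode n) (j : Fin n) (b : Bool) :
    (permAct π w).symm (j, b) = w.symm (π⁻¹ j, b) := rfl

theorem rev_apply (w : GaussCode n) (i : Fin (2 * n)) : rev w i = w i.rev := rfl

theorem rev_symm_apply (w : GaussCode n) (e : Fin n × Bool) :
    (rev w).symm e = (w.symm e).rev := by
  simp [rev]

variable [NeZero n]

theorem shift_val_apply (c : Fin (2 * n)) (w : GaussCode n) (i : Fin (2 * n)) :
    shift c.val w i = w (i + c) := by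
  simp [shift]

theorem projLP_eq_of_strictMono (u : GaussCode n) (σ : Equiv.Perm (Fin n))
    (hσ : StrictMono fun j => u.symm (σ j, false)) :
    projLP u = shift (u.symm (σ 0, false)).val (permAct σ⁻¹ u) := by
  have hsort : Tuple.sort (fun j : Fin n => u.symm (j, false)) = σ :=
    Tuple.sort_eq_of_strictMono_comp hσ
  simp only [projLP, hsort, permAct_symm_apply, inv_inv]

def reflect (c : Fin (2 * n)) (w : GaussCode n) : GaussCode n :=
  permAct Fin.revPerm ((Equiv.subLeft c).trans w)

theorem reflect_apply (c : Fin (2 * n)) (w : GaussCode n) (i : Fin (2 * n)) :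
    reflect c w i = ((w (c - i)).1.rev, (w (c - i)).2) := rfl

theorem reflect_symm_apply (c : Fin (2 * n)) (w : GaussCode n) (j : Fin n) (b : Bool) :
    (reflect c w).symm (j, b) = c - w.symm (j.rev, b) := by
  rw [Equiv.symm_apply_eq, reflect_apply, sub_sub_cancel, Equiv.apply_symm_apply, Fin.rev_rev]

theorem reflect_reflect (c : Fin (2 * n)) (w : GaussCode n) : reflect c (reflect c w) = w := by
  ext i <;> simp [reflect_apply]

theorem shift_permAct_rev_eq_reflect (c : Fin (2 * n)) (w : GaussCode n) :
    shift c.rev.val (permAct Fin.revPerm (rev w)) = reflect c w := by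
  refine Equiv.ext fun i => ?_
  have hpos : (c.rev + i).rev = c - i := by rw [Fin.rev_add, Fin.rev_rev]
  rw [shift_val_apply, add_comm, permAct_apply, rev_apply, hpos, reflect_apply]
  rfl

def lastLPos (w : GaussCode n) : Fin (2 * n) :=
  w.symm ((0 : Fin n).rev, false)

variable {w : GaussCode n}

theorem symm_le_lastLPos (hw : IsLeftPreferred w) (j : Fin n) :
    w.symm (j, false) ≤ lastLPos w :=
  hw.1.monotone (Fin.le_rev_iff.2 (Fin.zero_le _))

theorem revLP_eq_reflect (hw : IsLeftPreferred w) :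
    revLP w = reflect (lastLPos w) w := by
  have hanti : StrictMono fun j => (rev w).symm (Fin.revPerm j, false) := fun a b hab => by
    simpa [rev_symm_apply] using hw.1 (Fin.rev_lt_rev.2 hab)
  rw [revLP, projLP_eq_of_strictMono _ _ hanti, rev_symm_apply, Fin.revPerm_apply]
  exact shift_permAct_rev_eq_reflect _ w

theorem IsLeftPreferred.reflect_lastLPos (hw : IsLeftPreferred w) :
    IsLeftPreferred (reflect (lastLPos w) w) := by
  refine ⟨fun a b hab => ?_, ?_⟩
  · simp only [reflect_symm_apply]
    have hlt : w.symm (b.rev, false) < w.symm (a.rev, false) := hw.1 (Fin.rev_lt_rev.2 hab)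
    have hle_a := symm_le_lastLPos hw a.rev
    have hle_b := symm_le_lastLPos hw b.rev
    rw [Fin.lt_def, Fin.sub_val_of_le hle_a, Fin.sub_val_of_le hle_b]
    rw [Fin.lt_def] at hlt
    rw [Fin.le_def] at hle_a
    omega
  · simp [reflect_apply, lastLPos]

theorem lastLPos_reflect_lastLPos (hw : IsLeftPreferred w) :
    lastLPos (reflect (lastLPos w) w) = lastLPos w := by
  rw [lastLPos, reflect_symm_apply, Fin.rev_rev, ← hw.2, Equiv.symm_apply_apply, sub_zero]

end GaussCode

open GaussCode in
/-- `rev^LP` is an involution of the set of left preferred Gauss codes. -/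
theorem stmt4 (n : ℕ) [NeZero n] (w : GaussCode n) (hw : IsLeftPreferred w) :
    IsLeftPreferred (revLP w) ∧ revLP (revLP w) = w := by
  have hrev := hw.reflect_lastLPos
  refine ⟨revLP_eq_reflect hw ▸ hrev, ?_⟩
  rw [revLP_eq_reflect hw, revLP_eq_reflect hrev, lastLPos_reflect_lastLPos hw, reflect_reflect]
end
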